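/- arXiv:2212.03661 — 5 statements merged into one kernel-verified Lean document; each statement's English description precedes it below -/
import Mathlib

section
/- Let U₂ ⊆ ℂ \ {0} be open and connected, f₂ : U₂ → ℂ holomorphic with a fixed point z₂ ∈ U₂ satisfying f₂(z₂) = z₂ and |f₂'(z₂)| > 1. Let H : U₂ → ℂ be holomorphic of the form H(z) = A + B·f₂(z)/z with B ≠ 0. Suppose W ⊆ U₂ is an open neighborhood of z₂ with f₂(W) ⊆ U₂ and f₂(f₂(W)) ⊆ U₂, and H(f₂∘f₂(z)) = H(z) for all z ∈ W. Then a contradiction follows; i.e., no such H exists. -/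
/-! Differentiating `H ∘ f₂ ∘ f₂ = H` at `z₂` gives `λ² H'(z₂) = H'(z₂)` with `λ = f₂'(z₂)`,
while `H'(z₂) = B (λ - 1) / z₂`; so `B (λ - 1)² (λ + 1) = 0`, impossible when `|λ| > 1`. -/

open Filter Topology

theorem HasDerivAt.smul_eq_self_of_comp_eventuallyEq {𝕜 F : Type*} [NontriviallyNormedField 𝕜]
    [NormedAddCommGroup F] [NormedSpace 𝕜 F] {H : 𝕜 → F} {φ : 𝕜 → 𝕜} {z μ : 𝕜} {D : F}
    (hH : HasDerivAt H D z) (hφ : HasDerivAt φ μ z) (hfix : φ z = z)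
    (hinv : H ∘ φ =ᶠ[𝓝 z] H) : μ • D = D := by
  have hcomp : HasDerivAt (H ∘ φ) (μ • D) z := (hfix.symm ▸ hH).scomp z hφ
  exact (hcomp.congr_of_eventuallyEq hinv.symm).unique hH

theorem hasDerivAt_const_add_mul_div_id_of_isFixedPt {𝕜 : Type*} [NontriviallyNormedField 𝕜]
    {f : 𝕜 → 𝕜} {z l : 𝕜} (A B : 𝕜) (hf : HasDerivAt f l z) (hfix : f z = z) (hz : z ≠ 0) :
    HasDerivAt (fun w => A + B * f w / w) (B * (l - 1) / z) z := by
  refine (((hf.const_mul B).div (hasDerivAt_id z) hz).const_add A).congr_deriv ?_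
  rw [hfix, id]
  field_simp

theorem stmt9_general (U₂ : Set ℂ)
    (h0 : (0 : ℂ) ∉ U₂) (f₂ : ℂ → ℂ)
    (z₂ : ℂ) (hz₂ : z₂ ∈ U₂) (hfix : f₂ z₂ = z₂)
    (hrep : 1 < ‖deriv f₂ z₂‖)
    (A B : ℂ) (hB : B ≠ 0) (H : ℂ → ℂ) (hH : ∀ z, H z = A + B * f₂ z / z)
    (W : Set ℂ) (hW : IsOpen W) (hz₂W : z₂ ∈ W)
    (hinv : ∀ z ∈ W, H (f₂ (f₂ z)) = H z) :
    False := by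
  set l := deriv f₂ z₂
  have hz₂0 : z₂ ≠ 0 := fun h => h0 (h ▸ hz₂)
  have hl : l ≠ 0 := norm_pos_iff.mp (one_pos.trans hrep)
  -- `deriv f₂ z₂ = 0` unless `f₂` is differentiable at `z₂`.
  have hf : HasDerivAt f₂ l z₂ := (differentiableAt_of_deriv_ne_zero hl).hasDerivAt
  have hH' : HasDerivAt H (B * (l - 1) / z₂) z₂ := by
    rw [funext hH]
    exact hasDerivAt_const_add_mul_div_id_of_isFixedPt A B hf hfix hz₂0
  have hff : HasDerivAt (f₂ ∘ f₂) (l * l) z₂ := (hfix.symm ▸ hf).comp z₂ hf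
  have hD_fixed := hH'.smul_eq_self_of_comp_eventuallyEq hff (by simp [hfix])
    (eventually_of_mem (hW.mem_nhds hz₂W) hinv)
  have hl_sub_one : l - 1 ≠ 0 := fun h => by simp [sub_eq_zero.mp h] at hrep
  have hl_add_one : l + 1 ≠ 0 := fun h => by simp [eq_neg_of_add_eq_zero_left h] at hrep
  have hD : B * (l - 1) / z₂ ≠ 0 := div_ne_zero (mul_ne_zero hB hl_sub_one) hz₂0
  exact mul_ne_zero (mul_ne_zero hl_sub_one hl_add_one) hD (by rw [smul_eq_mul] at hD_fixed; linear_combination hD_fixed)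

/-- no holomorphic `H(z) = A + B·f₂(z)/z` with `B ≠ 0` can satisfy
`H ∘ f₂^{∘2} = H` near a repelling fixed point `z₂` of `f₂`. -/
theorem stmt9 (U₂ : Set ℂ) (hU₂ : IsOpen U₂) (hconn : IsConnected U₂)
    (h0 : (0 : ℂ) ∉ U₂) (f₂ : ℂ → ℂ) (hdiff : DifferentiableOn ℂ f₂ U₂)
    (z₂ : ℂ) (hz₂ : z₂ ∈ U₂) (hfix : f₂ z₂ = z₂)
    (hrep : 1 < ‖deriv f₂ z₂‖)
    (A B : ℂ) (hB : B ≠ 0) (H : ℂ → ℂ) (hH : ∀ z, H z = A + B * f₂ z / z)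
    (W : Set ℂ) (hW : IsOpen W) (hz₂W : z₂ ∈ W) (hWU : W ⊆ U₂)
    (hmaps : Set.MapsTo f₂ W U₂) (hmaps2 : Set.MapsTo (f₂ ∘ f₂) W U₂)
    (hinv : ∀ z ∈ W, H (f₂ (f₂ z)) = H z) :
    False :=
  stmt9_general U₂ h0 f₂ z₂ hz₂ hfix hrep A B hB H hH W hW hz₂W hinv
end

section
/- Let U₂ ⊆ ℂ \ {0} be open and connected, f₂ : U₂ → ℂ holomorphic, z₂ ∈ U₂ with f₂(z₂) = z₂, λ₂ := f₂'(z₂), |λ₂| > 1, and a, b ∈ ℂ with a ≠ 0. Suppose on a neighborhood W of z₂ (with f₂(W) ⊆ U₂) we have a·b·f₂(z)/z + a·b·(f₂∘f₂)(z)/f₂(z) = c for some constant c ∈ ℂ. Then b = 0. -/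
open Filter Topology

/-- At a fixed point `z₀ ≠ 0` with multiplier `l`, the quotients `f z / z` and `f (f z) / f z`
have derivatives `(l - 1) / z₀` and `l (l - 1) / z₀`. -/
theorem HasDerivAt.div_id_add_comp_div_of_apply_eq {𝕜 : Type*} [NontriviallyNormedField 𝕜]
    {f : 𝕜 → 𝕜} {l z₀ : 𝕜} (hf : HasDerivAt f l z₀) (hfix : f z₀ = z₀) (hz₀ : z₀ ≠ 0) :
    HasDerivAt (fun z => f z / z + f (f z) / f z) ((l ^ 2 - 1) / z₀) z₀ := by
  have hf' : HasDerivAt f l (f z₀) := by rwa [hfix]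
  refine ((hf.div (hasDerivAt_id z₀) hz₀).add
    ((hf'.comp z₀ hf).div hf (by rwa [hfix]))).congr_deriv ?_
  simp only [Function.comp_apply, hfix, id]
  field_simp
  ring

theorem sq_ne_one_of_one_lt_norm {𝕜 : Type*} [NormedDivisionRing 𝕜] {x : 𝕜} (hx : 1 < ‖x‖) :
    x ^ 2 ≠ 1 := by
  intro h
  have := one_lt_pow₀ hx two_ne_zero
  rw [← norm_pow, h, norm_one] at this
  exact this.false

theorem stmt10_general (U₂ : Set ℂ) (hU₂ : IsOpen U₂)
    (h0 : (0 : ℂ) ∉ U₂) (f₂ : ℂ → ℂ) (hdiff : DifferentiableOn ℂ f₂ U₂)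
    (z₂ : ℂ) (hz₂ : z₂ ∈ U₂) (hfix : f₂ z₂ = z₂)
    (lam₂ : ℂ) (hlam₂ : lam₂ = deriv f₂ z₂) (hrep : 1 < ‖lam₂‖)
    (a b c : ℂ) (ha : a ≠ 0)
    (W : Set ℂ) (hW : IsOpen W) (hz₂W : z₂ ∈ W)
    (heq : ∀ z ∈ W, a * b * f₂ z / z + a * b * f₂ (f₂ z) / f₂ z = c) :
    b = 0 := by
  have hz₂0 : z₂ ≠ 0 := fun h => h0 (h ▸ hz₂)
  have hf : HasDerivAt f₂ lam₂ z₂ :=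
    hlam₂ ▸ (hdiff.differentiableAt (hU₂.mem_nhds hz₂)).hasDerivAt
  have hconst : (fun z => a * b * (f₂ z / z + f₂ (f₂ z) / f₂ z)) =ᶠ[𝓝 z₂] fun _ => c :=
    eventually_of_mem (hW.mem_nhds hz₂W) fun z hz => by rw [← heq z hz]; ring
  have hderiv : a * b * ((lam₂ ^ 2 - 1) / z₂) = 0 :=
    ((hf.div_id_add_comp_div_of_apply_eq hfix hz₂0).const_mul (a * b)).unique
      ((hasDerivAt_const z₂ c).congr_of_eventuallyEq hconst)
  have hsq : lam₂ ^ 2 - 1 ≠ 0 := sub_ne_zero.mpr (sq_ne_one_of_one_lt_norm hrep)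
  simpa [ha, hz₂0, hsq] using hderiv

/-- if `a·b·f₂(z)/z + a·b·f₂^{∘2}(z)/f₂(z)` is constant near a
repelling fixed point `z₂` of `f₂` and `a ≠ 0`, then `b = 0`. -/
theorem stmt10 (U₂ : Set ℂ) (hU₂ : IsOpen U₂) (hconn : IsConnected U₂)
    (h0 : (0 : ℂ) ∉ U₂) (f₂ : ℂ → ℂ) (hdiff : DifferentiableOn ℂ f₂ U₂)
    (z₂ : ℂ) (hz₂ : z₂ ∈ U₂) (hfix : f₂ z₂ = z₂)
    (lam₂ : ℂ) (hlam₂ : lam₂ = deriv f₂ z₂) (hrep : 1 < ‖lam₂‖)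
    (a b c : ℂ) (ha : a ≠ 0)
    (W : Set ℂ) (hW : IsOpen W) (hz₂W : z₂ ∈ W) (hWU : W ⊆ U₂)
    (hmaps : Set.MapsTo f₂ W U₂)
    (heq : ∀ z ∈ W, a * b * f₂ z / z + a * b * f₂ (f₂ z) / f₂ z = c) :
    b = 0 :=
  stmt10_general U₂ hU₂ h0 f₂ hdiff z₂ hz₂ hfix lam₂ hlam₂ hrep a b c ha W hW hz₂W heq
end

section
/- Let V ⊆ ℂ be a nonempty, hyperbolic, simply connected open set, and for i = 1, 2 let gᵢ : V → V be holomorphic with gᵢ(V) ⋐ V and g₁(V) ∩ g₂(V) = ∅. Then for every n ≥ 1, the map g₂ ∘ g₁^{∘(n−1)} : V → V has a unique fixed point wₙ, and wₙ ∈ g₂(V). Moreover, if f denotes the map with inverse branches g₁ and g₂ (i.e., f ∘ g₁ = id_V and f ∘ g₂ = id_V), then wₙ is a periodic point of f of exact period n. -/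
/-!
The iterates `h^[n + 1]` of `h = g₂ ∘ g₁^[n - 1]` take values in the compact set
`K = closure (g₂ '' V) ⊆ V`, so by the Schwarz lemma they form an equicontinuous family, and along
an ultrafilter they converge locally uniformly to a holomorphic map `φ`. Every value of `φ` is a
limit of points `h^[m + 1] bₘ` with `bₘ ∈ K`, hence `φ '' V = φ '' K` and `‖φ‖` attains its
maximum over `V`. By the maximum modulus principle `φ` is a constant `w`, which is then the unique
fixed point of `h` in `V`. Under `f` the orbit of `w` is `w, g₁^[n - 1] w, …, g₁ w`, and it meets
`g₂ '' V` only at `w` since `g₁ '' V` and `g₂ '' V` are disjoint; so the period is exactly `n`.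
-/

open Set Metric Filter Function Topology

theorem equicontinuousOn_of_forall_norm_le {ι E G : Type*} [NormedAddCommGroup E]
    [NormedSpace ℂ E] [NormedAddCommGroup G] [NormedSpace ℂ G] {F : ι → E → G} {V : Set E}
    {M : ℝ} (hV : IsOpen V) (hd : ∀ i, DifferentiableOn ℂ (F i) V)
    (hb : ∀ i, ∀ z ∈ V, ‖F i z‖ ≤ M) :
    EquicontinuousOn F V := by
  intro x hx
  obtain ⟨r, hr, hrV⟩ := Metric.isOpen_iff.1 hV x hx
  refine (equicontinuousAt_of_continuity_modulus (fun z => 2 * M / r * dist z x) ?_ F ?_)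
    |>.equicontinuousWithinAt V
  · simpa using ((continuous_id.dist (continuous_const (y := x))).tendsto x).const_mul (2 * M / r)
  · filter_upwards [ball_mem_nhds x hr] with z hz i
    have hmaps : MapsTo (F i) (ball x r) (closedBall (F i x) (2 * M)) := fun w hw =>
      mem_closedBall.2 <| (dist_le_norm_add_norm _ _).trans <| by
        linarith [hb i w (hrV hw), hb i x hx]
    rw [dist_comm]
    exact Complex.dist_le_div_mul_dist_of_mapsTo_ball ((hd i).mono hrV) hmaps hz

theorem EquicontinuousOn.tendstoUniformlyOn_of_tendsto {ι X α : Type*} [TopologicalSpace X]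
    [UniformSpace α] {F : ι → X → α} {f : X → α} {p : Filter ι} {K : Set X} (hK : IsCompact K)
    (hF : EquicontinuousOn F K) (hlim : ∀ x ∈ K, Tendsto (F · x) p (𝓝 (f x))) :
    TendstoUniformlyOn F f p K := by
  have hunif := (EquicontinuousOn.tendsto_uniformOnFun_iff_pi' (𝔖 := {K}) (by simpa)
      (by simpa using hF) p f).2 <| by
    rw [sUnion_singleton, tendsto_pi_nhds]
    exact fun x => hlim x x.2
  rw [UniformOnFun.tendsto_iff_tendstoUniformlyOn] at hunif
  exact hunif K rfl

theorem EquicontinuousOn.tendstoLocallyUniformlyOn_of_tendsto {ι X α : Type*}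
    [TopologicalSpace X] [LocallyCompactSpace X] [UniformSpace α] {F : ι → X → α} {f : X → α}
    {p : Filter ι} {V : Set X} (hV : IsOpen V)
    (hF : EquicontinuousOn F V) (hlim : ∀ x ∈ V, Tendsto (F · x) p (𝓝 (f x))) :
    TendstoLocallyUniformlyOn F f p V :=
  (tendstoLocallyUniformlyOn_iff_forall_isCompact hV).2 fun _ hKV hK =>
    (hF.mono hKV).tendstoUniformlyOn_of_tendsto hK fun x hx => hlim x (hKV hx)

theorem existsUnique_isFixedPt_of_tendsto_iterate {X : Type*} [TopologicalSpace X] [T2Space X]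
    {V : Set X} {h : X → X} {p : Filter ℕ} [p.NeBot] {w : X} (hw : w ∈ V) (hVV : MapsTo h V V)
    (hc : ContinuousAt h w) (hlim : ∀ z ∈ V, Tendsto (fun n => h^[n + 1] z) p (𝓝 w)) :
    ∃! x, x ∈ V ∧ IsFixedPt h x := by
  refine ⟨w, ⟨hw, ?_⟩, fun w' ⟨hw', hfix⟩ => ?_⟩
  · refine tendsto_nhds_unique (hc.tendsto.comp (hlim w hw)) ?_
    simpa only [comp_def, ← iterate_succ_apply' h, iterate_succ_apply] using hlim (h w) (hVV hw)
  · exact tendsto_nhds_unique (tendsto_const_nhds.congr fun n => (hfix.iterate (n + 1)).symm)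
      (hlim w' hw')

section IteratedHolomorphicMap

variable {V K : Set ℂ} {h : ℂ → ℂ}

theorem mapsTo_iterate_succ (hhK : MapsTo h V K) (hKV : K ⊆ V) (n : ℕ) :
    MapsTo h^[n + 1] V K := by
  rw [iterate_succ']
  exact hhK.comp ((hhK.mono_right hKV).iterate n)

theorem exists_tendstoLocallyUniformlyOn_iterate (U : Ultrafilter ℕ) (hV : IsOpen V)
    (hK : IsCompact K) (hKV : K ⊆ V) (hhK : MapsTo h V K) (hd : DifferentiableOn ℂ h V) :
    ∃ φ : ℂ → ℂ, MapsTo φ V K ∧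
      TendstoLocallyUniformlyOn (fun n => h^[n + 1]) φ (U : Filter ℕ) V := by
  have hlim : ∀ z ∈ V, ∃ y ∈ K, Tendsto (fun n => h^[n + 1] z) U (𝓝 y) := fun z hz =>
    hK.ultrafilter_le_nhds' (U.map _)
      (Ultrafilter.mem_map.2 (univ_mem' fun n => mapsTo_iterate_succ hhK hKV n hz))
  choose! φ hφK hφ using hlim
  obtain ⟨M, hM⟩ := hK.isBounded.exists_norm_le
  have hequi : EquicontinuousOn (fun n => h^[n + 1]) V :=
    equicontinuousOn_of_forall_norm_le hV (fun n => hd.iterate (hhK.mono_right hKV) (n + 1))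
      fun n z hz => hM _ (mapsTo_iterate_succ hhK hKV n hz)
  exact ⟨φ, hφK, hequi.tendstoLocallyUniformlyOn_of_tendsto hV hφ⟩

theorem image_subset_image_of_tendstoLocallyUniformlyOn_iterate {U : Ultrafilter ℕ}
    (hU : (U : Filter ℕ) ≤ atTop) (hK : IsCompact K) (hKV : K ⊆ V) (hhK : MapsTo h V K)
    (hc : ContinuousOn h V) {φ : ℂ → ℂ}
    (hφ : TendstoLocallyUniformlyOn (fun n => h^[n + 1]) φ (U : Filter ℕ) V) : φ '' V ⊆ φ '' K := by
  have hVV : MapsTo h V V := hhK.mono_right hKV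
  rintro _ ⟨z, hz, rfl⟩
  -- `h^[n + 1] z = h^[m + 1] (h^[n - m] z)` lies in the closed set `h^[m + 1] '' K` for `n > m`
  have hmem : ∀ m, φ z ∈ h^[m + 1] '' K := by
    intro m
    have hclosed : IsClosed (h^[m + 1] '' K) :=
      (hK.image_of_continuousOn ((hc.iterate hVV _).mono hKV)).isClosed
    refine hclosed.mem_of_tendsto (hφ.tendsto_at hz)
      (Eventually.mono (hU (eventually_gt_atTop m)) fun n hn => ?_)
    refine ⟨h^[n - m - 1 + 1] z, mapsTo_iterate_succ hhK hKV _ hz, ?_⟩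
    rw [← iterate_add_apply]
    congr 1
    omega
  choose b hbK hb using hmem
  obtain ⟨c, hcK, hbc⟩ := hK.ultrafilter_le_nhds' (U.map b) (Ultrafilter.mem_map.2 (univ_mem' hbK))
  have hφc : ContinuousOn φ V :=
    hφ.continuousOn (Frequently.of_forall fun n => hc.iterate hVV (n + 1))
  have hlim := hφ.tendsto_comp (hφc c (hKV hcK)) (hKV hcK)
    (tendsto_nhdsWithin_iff.2 ⟨hbc, Eventually.of_forall fun n => hKV (hbK n)⟩)
  simp only [hb] at hlim
  exact ⟨c, hcK, tendsto_nhds_unique hlim tendsto_const_nhds⟩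

theorem existsUnique_isFixedPt_of_mapsTo_isCompact (hV : IsOpen V) (hVc : IsConnected V)
    (hK : IsCompact K) (hKV : K ⊆ V) (hhK : MapsTo h V K) (hd : DifferentiableOn ℂ h V) :
    ∃! w, w ∈ V ∧ IsFixedPt h w := by
  set U := Ultrafilter.of (atTop : Filter ℕ)
  have hVV : MapsTo h V V := hhK.mono_right hKV
  obtain ⟨φ, hφK, hφ⟩ := exists_tendstoLocallyUniformlyOn_iterate U hV hK hKV hhK hd
  have hφd : DifferentiableOn ℂ φ V :=
    hφ.differentiableOn (Eventually.of_forall fun n => hd.iterate hVV (n + 1)) hV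
  obtain ⟨b, hbK, hbmax⟩ :=
    hK.exists_isMaxOn (hVc.nonempty.image h |>.mono (image_subset_iff.2 hhK))
      (continuous_norm.comp_continuousOn (hφd.continuousOn.mono hKV))
  have hmax : IsMaxOn (norm ∘ φ) V b := by
    intro z hz
    obtain ⟨c, hcK, hc⟩ := image_subset_image_of_tendstoLocallyUniformlyOn_iterate
      (Ultrafilter.of_le _) hK hKV hhK hd.continuousOn hφ ⟨z, hz, rfl⟩
    show ‖φ z‖ ≤ ‖φ b‖
    exact hc ▸ hbmax hcK
  have hconst := Complex.eqOn_of_isPreconnected_of_isMaxOn_norm hVc.isPreconnected hV hφd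
    (hKV hbK) hmax
  have hwV : φ b ∈ V := hKV (hφK (hKV hbK))
  refine existsUnique_isFixedPt_of_tendsto_iterate (p := U) hwV hVV
    (hd.continuousOn.continuousAt (hV.mem_nhds hwV)) fun z hz => ?_
  simpa only [hconst hz, const_apply] using hφ.tendsto_at hz

end IteratedHolomorphicMap

theorem Set.LeftInvOn.iterate {α : Type*} {f g : α → α} {s : Set α} (hfg : LeftInvOn f g s)
    (hg : MapsTo g s s) (n : ℕ) : LeftInvOn f^[n] g^[n] s := by
  induction n with
  | zero => exact fun _ _ => rfl
  | succ n ih => rw [iterate_succ, iterate_succ']; exact ih.comp hfg (hg.iterate n)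

theorem iterate_apply_eq_of_isFixedPt_comp_iterate {α : Type*} {f g₁ g₂ : α → α} {s : Set α}
    (hf₁ : LeftInvOn f g₁ s) (hf₂ : LeftInvOn f g₂ s) (hg₁ : MapsTo g₁ s s) {n : ℕ} {w : α}
    (hw : w ∈ s) (hfix : IsFixedPt (g₂ ∘ g₁^[n - 1]) w) {m : ℕ} (hm : 1 ≤ m) (hmn : m ≤ n) :
    f^[m] w = g₁^[n - m] w := by
  obtain ⟨k, rfl⟩ : ∃ k, m = k + 1 := ⟨m - 1, by omega⟩
  have hfw : f w = g₁^[k + (n - (k + 1))] w := by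
    rw [show k + (n - (k + 1)) = n - 1 by omega]
    conv_lhs => rw [← hfix]
    exact hf₂ (hg₁.iterate _ hw)
  rw [iterate_succ_apply, hfw, iterate_add_apply]
  exact hf₁.iterate hg₁ _ (hg₁.iterate _ hw)

theorem stmt14_general (V : Set ℂ) (hV : IsOpen V)
    (hsc : SimplyConnectedSpace V)
    (g₁ g₂ : ℂ → ℂ)
    (hd₁ : DifferentiableOn ℂ g₁ V) (hd₂ : DifferentiableOn ℂ g₂ V)
    (hm₁ : Set.MapsTo g₁ V V)
    (hc₂ : IsCompact (closure (g₂ '' V)) ∧ closure (g₂ '' V) ⊆ V)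
    (hdisj : Disjoint (g₁ '' V) (g₂ '' V))
    (f : ℂ → ℂ) (hf₁ : ∀ z ∈ V, f (g₁ z) = z) (hf₂ : ∀ z ∈ V, f (g₂ z) = z) :
    ∀ n : ℕ, 1 ≤ n → ∃ w : ℂ,
      (w ∈ V ∧ g₂ (g₁^[n - 1] w) = w) ∧
      (∀ w', w' ∈ V ∧ g₂ (g₁^[n - 1] w') = w' → w' = w) ∧
      w ∈ g₂ '' V ∧ f^[n] w = w ∧ ∀ m, 1 ≤ m → m < n → f^[m] w ≠ w := by
  intro n hn
  obtain ⟨w, ⟨hwV, hw⟩, huniq⟩ := existsUnique_isFixedPt_of_mapsTo_isCompact (h := g₂ ∘ g₁^[n - 1])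
    hV (isConnected_iff_connectedSpace.2 inferInstance) hc₂.1 hc₂.2
    (fun z hz => subset_closure (mem_image_of_mem g₂ (hm₁.iterate _ hz)))
    (hd₂.comp (hd₁.iterate hm₁ _) (hm₁.iterate _))
  have horbit : ∀ m, 1 ≤ m → m ≤ n → f^[m] w = g₁^[n - m] w := fun _ =>
    iterate_apply_eq_of_isFixedPt_comp_iterate hf₁ hf₂ hm₁ hwV hw
  have hw₂ : w ∈ g₂ '' V := ⟨_, hm₁.iterate _ hwV, hw⟩
  refine ⟨w, ⟨hwV, hw⟩, huniq, hw₂, by simpa using horbit n hn le_rfl, fun m hm hmn hfix => ?_⟩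
  have hw₁ : f^[m] w ∈ g₁ '' V := by
    rw [horbit m hm hmn.le, ← Nat.sub_add_cancel (Nat.sub_pos_of_lt hmn), iterate_succ_apply']
    exact mem_image_of_mem g₁ (hm₁.iterate _ hwV)
  exact disjoint_left.1 hdisj (hfix ▸ hw₁) hw₂

/-- for an escaping quadratic-like map with inverse branches
`g₁, g₂` on a hyperbolic simply connected `V`, `g₂ ∘ g₁^{∘(n−1)}` has a unique
fixed point `wₙ ∈ g₂(V)`, which is a periodic point of `f` of exact period `n`. -/
theorem stmt14 (V : Set ℂ) (hV : IsOpen V) (hne : V.Nonempty)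
    (hhyp : ∃ p q : ℂ, p ≠ q ∧ p ∉ V ∧ q ∉ V)
    (hsc : SimplyConnectedSpace V)
    (g₁ g₂ : ℂ → ℂ)
    (hd₁ : DifferentiableOn ℂ g₁ V) (hd₂ : DifferentiableOn ℂ g₂ V)
    (hm₁ : Set.MapsTo g₁ V V) (hm₂ : Set.MapsTo g₂ V V)
    (hc₁ : IsCompact (closure (g₁ '' V)) ∧ closure (g₁ '' V) ⊆ V)
    (hc₂ : IsCompact (closure (g₂ '' V)) ∧ closure (g₂ '' V) ⊆ V)
    (hdisj : Disjoint (g₁ '' V) (g₂ '' V))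
    (f : ℂ → ℂ) (hf₁ : ∀ z ∈ V, f (g₁ z) = z) (hf₂ : ∀ z ∈ V, f (g₂ z) = z) :
    ∀ n : ℕ, 1 ≤ n → ∃ w : ℂ,
      (w ∈ V ∧ g₂ (g₁^[n - 1] w) = w) ∧
      (∀ w', w' ∈ V ∧ g₂ (g₁^[n - 1] w') = w' → w' = w) ∧
      w ∈ g₂ '' V ∧ f^[n] w = w ∧ ∀ m, 1 ≤ m → m < n → f^[m] w ≠ w :=
  stmt14_general V hV hsc g₁ g₂ hd₁ hd₂ hm₁ hc₂ hdisj f hf₁ hf₂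
end

section
/- Let λ ∈ ℂ with |λ| > 1 and b ∈ ℂ, and suppose (εₙ)ₙ is a sequence of complex numbers with εₙ → 0 such that (λ−1)·b + λ·εₙ − εₙ₊₁ belongs to a fixed closed discrete subset Λ ⊆ ℂ for all n. Then (λ−1)·b ∈ Λ, and εₙ = 0 for all sufficiently large n. -/
/-!
Passing to the limit in `(λ - 1) b + λ εₙ - εₙ₊₁ ∈ Λ` puts `(λ - 1) b` in the closed set `Λ`;
as `Λ` is discrete, the sequence is then eventually equal to its limit, i.e. `εₙ₊₁ = λ εₙ`
for large `n`. Since `|λ| ≥ 1`, the norms `|εₙ|` are then nondecreasing while tending to `0`,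
so they vanish.
-/

open Filter Topology

theorem IsClosed.mem_and_eventually_eq_of_tendsto_of_discreteTopology {X : Type*}
    [TopologicalSpace X] {Λ : Set X} (hclosed : IsClosed Λ) [DiscreteTopology Λ]
    {u : ℕ → X} {a : X} (hmem : ∀ n, u n ∈ Λ) (hu : Tendsto u atTop (𝓝 a)) :
    a ∈ Λ ∧ ∀ᶠ n in atTop, u n = a := by
  have ha : a ∈ Λ := hclosed.mem_of_tendsto hu (Eventually.of_forall hmem)
  have hsub : Tendsto (fun n => (⟨u n, hmem n⟩ : Λ)) atTop (pure ⟨a, ha⟩) := by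
    rw [← nhds_discrete, tendsto_subtype_rng]
    exact hu
  exact ⟨ha, (tendsto_pure.mp hsub).mono fun n hn => congrArg Subtype.val hn⟩

theorem eq_zero_of_tendsto_zero_of_norm_le_norm_succ {E : Type*} [NormedAddCommGroup E]
    {u : ℕ → E} (hu : Tendsto u atTop (𝓝 0)) (hle : ∀ n, ‖u n‖ ≤ ‖u (n + 1)‖) (n : ℕ) :
    u n = 0 := by
  have hmono : Monotone fun n => ‖u n‖ := monotone_nat_of_le_succ hle
  have hnorm : Tendsto (fun n => ‖u n‖) atTop (𝓝 0) := by simpa using hu.norm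
  exact norm_le_zero_iff.mp (hmono.ge_of_tendsto hnorm n)

theorem eventually_eq_zero_of_tendsto_zero_of_norm_le_norm_succ {E : Type*}
    [NormedAddCommGroup E] {u : ℕ → E} (hu : Tendsto u atTop (𝓝 0))
    (hle : ∀ᶠ n in atTop, ‖u n‖ ≤ ‖u (n + 1)‖) : ∀ᶠ n in atTop, u n = 0 := by
  obtain ⟨N, hN⟩ := eventually_atTop.mp hle
  have hshift : ∀ k, u (k + N) = 0 :=
    eq_zero_of_tendsto_zero_of_norm_le_norm_succ (hu.comp (tendsto_add_atTop_nat N))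
      fun k => by simpa [Nat.add_right_comm] using hN (k + N) (Nat.le_add_left N k)
  filter_upwards [eventually_ge_atTop N] with n hn
  simpa [Nat.sub_add_cancel hn] using hshift (n - N)

/-- if `εₙ → 0`, `|λ| > 1` and `(λ−1)b + λεₙ − εₙ₊₁` lies in a
closed discrete `Λ ⊆ ℂ` for all `n`, then `(λ−1)b ∈ Λ` and `εₙ = 0` eventually. -/
theorem stmt18 (Λ : Set ℂ) (hΛclosed : IsClosed Λ) (hΛdisc : DiscreteTopology Λ)
    (lam b : ℂ) (hlam : 1 < ‖lam‖)
    (ε : ℕ → ℂ) (hconv : Filter.Tendsto ε Filter.atTop (nhds 0))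
    (hmem : ∀ n, (lam - 1) * b + lam * ε n - ε (n + 1) ∈ Λ) :
    (lam - 1) * b ∈ Λ ∧ ∃ N : ℕ, ∀ n ≥ N, ε n = 0 := by
  have hlim : Tendsto (fun n => (lam - 1) * b + lam * ε n - ε (n + 1)) atTop
      (𝓝 ((lam - 1) * b)) := by
    simpa using (tendsto_const_nhds.add (hconv.const_mul lam)).sub
      (hconv.comp (tendsto_add_atTop_nat 1))
  obtain ⟨hb, heq⟩ := hΛclosed.mem_and_eventually_eq_of_tendsto_of_discreteTopology hmem hlim
  refine ⟨hb, eventually_atTop.mp (eventually_eq_zero_of_tendsto_zero_of_norm_le_norm_succ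
    hconv ?_)⟩
  filter_upwards [heq] with n hn
  have hrec : ε (n + 1) = lam * ε n := by linear_combination -hn
  rw [hrec, norm_mul]
  exact le_mul_of_one_le_left (norm_nonneg _) hlam.le
end

section
/- Let T_d denote the d-th Chebyshev polynomial (satisfying T_d(z + 1/z) = z^d + 1/z^d, suitably normalized), d ≥ 2. Then every multiplier of T_d at a periodic point in ℂ is a rational integer. More precisely, if z₀ is a periodic point of T_d of period p, then (T_d^{∘p})'(z₀) ∈ ℤ. -/
/-!
Every `z : ℂ` is `w + w⁻¹` for some `w ≠ 0`, so the functional equation forces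
`T^[p] = C_N` with `N = d ^ p`, the Chebyshev polynomial normalized by `C_N (2 cos θ) = 2 cos Nθ`.
Its derivative is `N • S_{N-1}`, where `S_{N-1} (2 cos θ) sin θ = sin Nθ`. At a fixed point
`z = 2 cos θ` we have `cos Nθ = cos θ`, hence `sin Nθ = ± sin θ` and `S_{N-1} z = ±1`, unless
`sin θ = 0`; then `z = ±2` and `S_{N-1} z` is an integer since `S_{N-1}` has integer coefficients.
-/

open Polynomial Polynomial.Chebyshev Complex

namespace Polynomial.Chebyshev

theorem C_derivative_eq_S (R : Type*) [CommRing R] (n : ℤ) :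
    derivative (C R n) = n * S R (n - 1) := by
  induction n using Polynomial.Chebyshev.induct with
  | zero => simp
  | one => simp
  | add_two n ih1 ih2 =>
    have h₁ := congr_arg derivative (C_add_two R n)
    have h₂ := S_add_one R n
    have h₃ := C_eq_S_sub_X_mul_S R (n + 1)
    simp only [derivative_sub, derivative_mul, derivative_X] at h₁
    linear_combination (norm := (push_cast; ring_nf)) h₁ + X * ih1 - ih2 + h₃ - n * h₂
  | neg_add_one n ih1 ih2 =>
    have h₁ := congr_arg derivative (C_sub_one R (-n))
    have h₂ := S_sub_two R (-n)
    have h₃ := C_eq_S_sub_X_mul_S R (-n)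
    simp only [derivative_sub, derivative_mul, derivative_X] at h₁
    linear_combination (norm := (push_cast; ring_nf)) h₁ + X * ih1 - ih2 + h₃ + (n + 1) * h₂

theorem C_eval_add_inv {K : Type*} [Field K] (n : ℕ) {w : K} (hw : w ≠ 0) :
    (C K n).eval (w + w⁻¹) = w ^ n + w⁻¹ ^ n := by
  rw [← dickson_one_one_eq_chebyshev_C, dickson_one_one_eval_add_inv _ _ (mul_inv_cancel₀ hw)]

theorem deriv_C_eval (n : ℤ) (z : ℂ) :
    deriv (fun z ↦ (C ℂ n).eval z) z = n * (S ℂ (n - 1)).eval z := by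
  simp [Polynomial.deriv, C_derivative_eq_S]

theorem S_sub_one_two_mul_complex_cos_eq_one_or_neg_one {n : ℤ} {θ : ℂ}
    (hcos : cos (n * θ) = cos θ) (hsin : sin θ ≠ 0) :
    (S ℂ (n - 1)).eval (2 * cos θ) = 1 ∨ (S ℂ (n - 1)).eval (2 * cos θ) = -1 := by
  have hS := S_two_mul_complex_cos θ (n - 1)
  simp only [Int.cast_sub, Int.cast_one, sub_add_cancel] at hS
  have hsq : (sin (n * θ) - sin θ) * (sin (n * θ) + sin θ) = 0 := by
    linear_combination sin_sq_add_cos_sq (n * θ) - sin_sq_add_cos_sq θ - (cos (n * θ) + cos θ) * hcos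
  rcases mul_eq_zero.mp hsq with h | h
  · exact Or.inl (mul_right_cancel₀ hsin (by linear_combination hS + h))
  · exact Or.inr (mul_right_cancel₀ hsin (by linear_combination hS + h))

theorem exists_int_S_sub_one_eval_eq_of_C_eval_eq {n : ℤ} {x : ℂ} (hx : (C ℂ n).eval x = x) :
    ∃ m : ℤ, (S ℂ (n - 1)).eval x = m := by
  obtain ⟨θ, hθ⟩ := cos_surjective (x / 2)
  obtain rfl : x = 2 * cos θ := by rw [hθ]; ring
  rw [C_two_mul_complex_cos] at hx
  have hcos : cos (n * θ) = cos θ := mul_left_cancel₀ two_ne_zero hx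
  by_cases hsin : sin θ = 0
  · have hsq : (cos θ - 1) * (cos θ + 1) = 0 := by
      linear_combination sin_sq_add_cos_sq θ - sin θ * hsin
    obtain ⟨r, hr⟩ : ∃ r : ℤ, 2 * cos θ = r := by
      rcases mul_eq_zero.mp hsq with h | h
      · exact ⟨2, by push_cast; linear_combination 2 * h⟩
      · exact ⟨-2, by push_cast; linear_combination 2 * h⟩
    refine ⟨(S ℤ (n - 1)).eval r, ?_⟩
    rw [hr]
    simpa using (algebraMap_eval_S (R' := ℂ) r (n - 1)).symm
  · rcases S_sub_one_two_mul_complex_cos_eq_one_or_neg_one hcos hsin with h | h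
    · exact ⟨1, by simp [h]⟩
    · exact ⟨-1, by simp [h]⟩

end Polynomial.Chebyshev

theorem Complex.exists_ne_zero_add_inv_eq (z : ℂ) : ∃ w : ℂ, w ≠ 0 ∧ w + w⁻¹ = z := by
  obtain ⟨θ, hθ⟩ := cos_surjective (z / 2)
  refine ⟨exp (θ * I), exp_ne_zero _, ?_⟩
  rw [← exp_neg, ← neg_mul, ← two_cos, hθ]
  ring

theorem eq_C_eval_of_apply_add_inv {F : ℂ → ℂ} {n : ℕ}
    (hF : ∀ w : ℂ, w ≠ 0 → F (w + w⁻¹) = w ^ n + w⁻¹ ^ n) : F = fun z ↦ (C ℂ n).eval z := by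
  funext z
  obtain ⟨w, hw, rfl⟩ := exists_ne_zero_add_inv_eq z
  rw [hF w hw, C_eval_add_inv n hw]

theorem iterate_apply_add_inv {K : Type*} [DivisionRing K] {T : K → K} {d : ℕ}
    (hT : ∀ w : K, w ≠ 0 → T (w + w⁻¹) = w ^ d + w⁻¹ ^ d) (p : ℕ) {w : K} (hw : w ≠ 0) :
    T^[p] (w + w⁻¹) = w ^ d ^ p + w⁻¹ ^ d ^ p := by
  induction p generalizing w with
  | zero => simp
  | succ p ih =>
    rw [Function.iterate_succ_apply, hT w hw, inv_pow, ih (pow_ne_zero d hw), inv_pow,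
      ← pow_mul, ← pow_succ', inv_pow]

theorem stmt19_general (d : ℕ) (T : ℂ → ℂ)
    (hT : ∀ w : ℂ, w ≠ 0 → T (w + w⁻¹) = w ^ d + (w⁻¹) ^ d)
    (p : ℕ) (z₀ : ℂ) (hper : T^[p] z₀ = z₀) :
    ∃ m : ℤ, deriv (T^[p]) z₀ = (m : ℂ) := by
  have hC : T^[p] = fun z ↦ (C ℂ (d ^ p : ℕ)).eval z :=
    eq_C_eval_of_apply_add_inv fun w hw ↦ iterate_apply_add_inv hT p hw
  obtain ⟨m, hm⟩ := exists_int_S_sub_one_eval_eq_of_C_eval_eq (n := (d ^ p : ℕ))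
    ((congrFun hC z₀).symm.trans hper)
  refine ⟨d ^ p * m, ?_⟩
  rw [hC, deriv_C_eval, hm]
  push_cast
  rfl

/-- the multipliers of the degree-`d` Chebyshev map, normalized by
`T_d(w + w⁻¹) = w^d + w^{−d}`, at its periodic points in `ℂ` are rational integers. -/
theorem stmt19 (d : ℕ) (hd : 2 ≤ d) (T : ℂ → ℂ)
    (hT : ∀ w : ℂ, w ≠ 0 → T (w + w⁻¹) = w ^ d + (w⁻¹) ^ d)
    (p : ℕ) (hp : 1 ≤ p) (z₀ : ℂ) (hper : T^[p] z₀ = z₀) :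
    ∃ m : ℤ, deriv (T^[p]) z₀ = (m : ℂ) :=
  stmt19_general d T hT p z₀ hper
end
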